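/- Let G be a 2-connected signed graph with a 2-separation (G₁, G₂) where V(G₁) ∩ V(G₂) = {u, v}, and suppose eᵢ ∈ E(Gᵢ) for i = 1, 2. Let Gᵢ⁺ be Gᵢ with a positive edge fᵢ = uv added. Then e₁ and e₂ are tied in G if and only if eᵢ and fᵢ are tied in Gᵢ⁺ for both i = 1 and i = 2. -/

import Mathlib

/-- A finite loopless signed multigraph. -/
structure SGraph : Type 1 where
  V : Type
  E : Type
  [fintV : Fintype V]
  [decV : DecidableEq V]
  [fintE : Fintype E]
  [decE : DecidableEq E]
  ends : E → Sym2 V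
  loopless : ∀ e, ¬ (ends e).IsDiag
  sgn : E → ℤˣ

attribute [instance] SGraph.fintV SGraph.decV SGraph.fintE SGraph.decE

namespace SGraph

variable (G : SGraph)

/-- Degree of a vertex in an edge set. -/
noncomputable def deg (S : Set G.E) (v : G.V) : ℕ := {e ∈ S | v ∈ G.ends e}.ncard

/-- The sign of an edge set: the product of the signs of its edges. -/
noncomputable def signOf (S : Set G.E) : ℤˣ := ∏ᶠ e ∈ S, G.sgn e

/-- An edge set is connected: any two of its edges are linked by a chain of
edges of the set, consecutive ones sharing a vertex. -/
def conn (S : Set G.E) : Prop :=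
  ∀ e ∈ S, ∀ f ∈ S,
    Relation.ReflTransGen (fun a b => a ∈ S ∧ b ∈ S ∧ ∃ v, v ∈ G.ends a ∧ v ∈ G.ends b) e f

/-- An edge set is (the edge set of) a cycle: nonempty, every vertex has degree 0 or 2,
and it is connected. -/
def IsCycle (S : Set G.E) : Prop :=
  S.Nonempty ∧ (∀ v, G.deg S v = 0 ∨ G.deg S v = 2) ∧ G.conn S

/-- The vertices covered by an edge set. -/
def verts (S : Set G.E) : Set G.V := {v | ∃ e ∈ S, v ∈ G.ends e}

/-- Two edges are untied: there are cycles of both signs through both edges. -/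
def Untied (e₁ e₂ : G.E) : Prop :=
  (∃ C, G.IsCycle C ∧ e₁ ∈ C ∧ e₂ ∈ C ∧ G.signOf C = 1) ∧
  (∃ C, G.IsCycle C ∧ e₁ ∈ C ∧ e₂ ∈ C ∧ G.signOf C = -1)

/-- Two edges are tied: all cycles through both have the same sign. -/
def Tied (e₁ e₂ : G.E) : Prop :=
  ∀ C C', G.IsCycle C → G.IsCycle C' → e₁ ∈ C → e₂ ∈ C → e₁ ∈ C' → e₂ ∈ C' →
    G.signOf C = G.signOf C'

/-- A signed graph is balanced if every cycle is positive. -/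
def Balanced : Prop := ∀ C, G.IsCycle C → G.signOf C = 1

/-- Reachability between vertices avoiding a forbidden vertex set `S`. -/
def ReachOutside (S : Set G.V) : G.V → G.V → Prop :=
  Relation.ReflTransGen (fun a b => a ∉ S ∧ b ∉ S ∧ ∃ e, G.ends e = s(a, b))

/-- The graph minus the vertex set `S` is connected. -/
def ConnOutside (S : Set G.V) : Prop :=
  ∀ u v : G.V, u ∉ S → v ∉ S → G.ReachOutside S u v

/-- `k`-connectivity: more than `k` vertices, and removing fewer than `k` vertices
leaves a connected graph. -/
def KConnected (k : ℕ) : Prop :=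
  k + 1 ≤ Fintype.card G.V ∧ ∀ S : Set G.V, S.ncard < k → G.ConnOutside S

/-- `P` is the edge set of a path from `a` to `b` (possibly trivial when `a = b`). -/
def IsPath (P : Set G.E) (a b : G.V) : Prop :=
  (a = b ∧ P = ∅) ∨
  (a ≠ b ∧ P.Nonempty ∧ G.deg P a = 1 ∧ G.deg P b = 1 ∧
    (∀ v, v ≠ a → v ≠ b → G.deg P v = 0 ∨ G.deg P v = 2) ∧ G.conn P)

/-- The vertices of a path from `a` to `b`, including its ends. -/
def pverts (P : Set G.E) (a b : G.V) : Set G.V := G.verts P ∪ {a, b}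

/-- An edge set is an edge-cut `δ(X)`. -/
def EdgeCut (S : Set G.E) : Prop :=
  ∃ X : Set G.V, ∀ e, e ∈ S ↔ ∃ a b, G.ends e = s(a, b) ∧ a ∈ X ∧ b ∉ X

/-- A signed graph is simple if no two distinct edges are parallel. -/
def Simple : Prop := ∀ e f : G.E, G.ends e = G.ends f → e = f

end SGraph

namespace SGraph

/-- The signed graph obtained from the edges `E₁` of `G` by adding one extra edge
between `u` and `v` of sign `σ`. -/
def plus1 (G : SGraph) (E₁ : Finset G.E) {u v : G.V} (huv : u ≠ v) (σ : ℤˣ) : SGraph where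
  V := G.V
  E := {e : G.E // e ∈ E₁} ⊕ Unit
  ends := Sum.elim (fun e => G.ends e.1) (fun _ => s(u, v))
  loopless := by
    rintro (e | e)
    · exact G.loopless e.1
    · simpa [Sym2.mk_isDiag_iff] using huv
  sgn := Sum.elim (fun e => G.sgn e.1) (fun _ => σ)

/-- The signed graph obtained from the edges `E₁` of `G` by adding two extra parallel
edges between `u` and `v`, one positive and one negative. -/
def plus2 (G : SGraph) (E₁ : Finset G.E) {u v : G.V} (huv : u ≠ v) : SGraph where
  V := G.V
  E := {e : G.E // e ∈ E₁} ⊕ Bool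
  ends := Sum.elim (fun e => G.ends e.1) (fun _ => s(u, v))
  loopless := by
    rintro (e | e)
    · exact G.loopless e.1
    · simpa [Sym2.mk_isDiag_iff] using huv
  sgn := Sum.elim (fun e => G.sgn e.1) (fun b => if b then 1 else -1)

end SGraph

/-!
For `i = 1, 2`, the cycles of `Gᵢ⁺` through `fᵢ` are exactly the `u`–`v` paths of `Gᵢ` closed up
by `fᵢ`, so `eᵢ` and `fᵢ` are tied in `Gᵢ⁺` iff all `u`–`v` paths of `Gᵢ` through `eᵢ` have the
same sign. A cycle of `G` through `e₁` and `e₂` splits at `u` and `v` into one such path on each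
side, and its sign is the product of their signs; this gives one direction. Conversely,
2-connectivity yields a `u`–`v` path `Q` of `G₂` through `e₂` (from two disjoint paths joining the
ends of `e₂` to `{u, v}`, by Whitney's form of Menger's theorem), and closing up paths of `G₁`
through `e₁` with `Q` turns equal cycle signs into equal path signs.
-/

namespace SGraph

open Relation

variable {G : SGraph}

section EdgeSet

lemma deg_eq_card (S : Set G.E) (w : G.V) [DecidablePred (· ∈ S)] :
    G.deg S w = (S.toFinset.filter fun e => w ∈ G.ends e).card := by
  rw [deg, ← Set.ncard_coe_finset]
  congr
  ext
  simp

theorem sum_deg (S : Set G.E) : ∑ w, G.deg S w = 2 * S.ncard := by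
  classical
  simp_rw [deg_eq_card]
  have := Finset.sum_card_bipartiteAbove_eq_sum_card_bipartiteBelow (s := Finset.univ)
    (t := S.toFinset) (r := fun w e => w ∈ G.ends e)
  simp only [Finset.bipartiteAbove, Finset.bipartiteBelow] at this
  rw [this, Set.ncard_eq_toFinset_card', Finset.card_eq_sum_ones, Finset.mul_sum, mul_one]
  refine Finset.sum_congr rfl fun e _ => ?_
  rw [← Sym2.card_toFinset_of_not_isDiag _ (G.loopless e)]
  congr
  ext
  simp

lemma even_deg_add_deg {S : Set G.E} {u v : G.V} (huv : u ≠ v)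
    (h : ∀ w, w ≠ u → w ≠ v → Even (G.deg S w)) : Even (G.deg S u + G.deg S v) := by
  have hsum : Even (∑ w, G.deg S w) := by rw [sum_deg]; exact even_two_mul _
  rw [← Finset.add_sum_erase _ _ (Finset.mem_univ u),
    ← Finset.add_sum_erase _ _ (Finset.mem_erase.2 ⟨huv.symm, Finset.mem_univ v⟩),
    ← add_assoc] at hsum
  refine (Nat.even_add.1 hsum).2 (Finset.even_sum _ fun w hw => ?_)
  simp only [Finset.mem_erase] at hw
  exact h w hw.2.1 hw.1

lemma deg_insert {S : Set G.E} {e : G.E} (he : e ∉ S) (w : G.V) :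
    G.deg (insert e S) w = G.deg S w + if w ∈ G.ends e then 1 else 0 := by
  classical
  simp only [deg_eq_card, Set.toFinset_insert, Finset.filter_insert]
  split_ifs <;> simp [Finset.card_insert_of_notMem, he]

lemma deg_singleton (f : G.E) (w : G.V) : G.deg {f} w = if w ∈ G.ends f then 1 else 0 := by
  classical
  simp only [deg_eq_card, Set.toFinset_singleton, Finset.filter_singleton]
  split_ifs <;> simp

lemma deg_union {A B : Set G.E} (h : Disjoint A B) (w : G.V) :
    G.deg (A ∪ B) w = G.deg A w + G.deg B w := by
  rw [deg, deg, deg, ← Set.ncard_union_eq (h.mono (Set.sep_subset _ _) (Set.sep_subset _ _))]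
  congr 1
  ext
  simp [or_and_right]

lemma deg_eq_zero_iff {S : Set G.E} {w : G.V} : G.deg S w = 0 ↔ w ∉ G.verts S := by
  rw [deg, Set.ncard_eq_zero]
  simp [verts, Set.eq_empty_iff_forall_notMem]

lemma mem_verts_iff_deg_ne_zero {S : Set G.E} {w : G.V} : w ∈ G.verts S ↔ G.deg S w ≠ 0 := by
  rw [Ne, deg_eq_zero_iff, not_not]

lemma exists_unique_of_deg_eq_one {S : Set G.E} {w : G.V} (h : G.deg S w = 1) :
    ∃ g ∈ S, w ∈ G.ends g ∧ ∀ g' ∈ S, w ∈ G.ends g' → g' = g := by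
  obtain ⟨g, hg⟩ := Set.ncard_eq_one.1 h
  have hmem : ∀ g', g' ∈ S ∧ w ∈ G.ends g' ↔ g' = g := fun g' => Set.ext_iff.1 hg g'
  exact ⟨g, ((hmem g).2 rfl).1, ((hmem g).2 rfl).2, fun g' h1 h2 => (hmem g').1 ⟨h1, h2⟩⟩

lemma verts_mono {A B : Set G.E} (h : A ⊆ B) : G.verts A ⊆ G.verts B :=
  fun _ ⟨e, he, hw⟩ => ⟨e, h he, hw⟩

lemma verts_insert (S : Set G.E) (e : G.E) :
    G.verts (insert e S) = {w | w ∈ G.ends e} ∪ G.verts S := by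
  ext
  simp [verts]

lemma signOf_union {A B : Set G.E} (h : Disjoint A B) :
    G.signOf (A ∪ B) = G.signOf A * G.signOf B :=
  finprod_mem_union h A.toFinite B.toFinite

lemma signOf_singleton (e : G.E) : G.signOf {e} = G.sgn e :=
  finprod_mem_singleton

end EdgeSet

section Conn

/-- `G.conn S` unfolds to `∀ e ∈ S, ∀ f ∈ S, ReflTransGen (G.Touch S) e f`. -/
def Touch (S : Set G.E) (e f : G.E) : Prop :=
  e ∈ S ∧ f ∈ S ∧ ∃ v, v ∈ G.ends e ∧ v ∈ G.ends f

instance (S : Set G.E) : Std.Symm (G.Touch S) :=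
  ⟨fun _ _ ⟨he, hf, v, hve, hvf⟩ => ⟨hf, he, v, hvf, hve⟩⟩

lemma Touch.mono {A B : Set G.E} (h : A ⊆ B) {e f : G.E} (hef : G.Touch A e f) :
    G.Touch B e f :=
  ⟨h hef.1, h hef.2.1, hef.2.2⟩

lemma conn_of_forall_reach {S : Set G.E} {g : G.E}
    (h : ∀ e ∈ S, ReflTransGen (G.Touch S) e g) : G.conn S :=
  fun e he f hf => (h e he).trans (Std.Symm.symm _ _ (h f hf))

lemma conn_singleton (e : G.E) : G.conn {e} := by
  rintro a rfl b rfl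
  exact ReflTransGen.refl

lemma conn_union {A B : Set G.E} (hA : G.conn A) (hB : G.conn B) {e f : G.E} (he : e ∈ A)
    (hf : f ∈ B) {w : G.V} (hwe : w ∈ G.ends e) (hwf : w ∈ G.ends f) : G.conn (A ∪ B) := by
  have hbridge : G.Touch (A ∪ B) f e := ⟨Or.inr hf, Or.inl he, w, hwf, hwe⟩
  refine conn_of_forall_reach (g := e) fun c hc => ?_
  rcases hc with hc | hc
  · exact ReflTransGen.mono (fun _ _ => Touch.mono Set.subset_union_left) _ _ (hA c hc e he)
  · exact (ReflTransGen.mono (fun _ _ => Touch.mono Set.subset_union_right) _ _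
      (hB c hc f hf)).tail hbridge

lemma reflTransGen_touch_union {C₁ C₂ : Set G.E} {a c : G.E} (ha : a ∈ C₁)
    (hac : ReflTransGen (G.Touch (C₁ ∪ C₂)) a c) :
    (c ∈ C₁ ∧ ReflTransGen (G.Touch C₁) a c) ∨
      ∃ g ∈ C₁, ∃ g' ∈ C₂, ∃ w, w ∈ G.ends g ∧ w ∈ G.ends g' ∧ ReflTransGen (G.Touch C₁) a g := by
  induction hac with
  | refl => exact Or.inl ⟨ha, ReflTransGen.refl⟩
  | tail _ hstep ih =>
    obtain ⟨-, hc, w, hwb, hwc⟩ := hstep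
    rcases ih with ⟨hb, hab⟩ | hcross
    · rcases hc with hc | hc
      · exact Or.inl ⟨hc, hab.tail ⟨hb, hc, w, hwb, hwc⟩⟩
      · exact Or.inr ⟨_, hb, _, hc, w, hwb, hwc, hab⟩
    · exact Or.inr hcross

/-- By parity, the component of any edge contains edges at both `u` and `v`. -/
lemma conn_of_deg_eq_one {S : Set G.E} {u v : G.V} (huv : u ≠ v)
    (hu : G.deg S u = 1) (hv : G.deg S v = 1)
    (heven : ∀ w, w ≠ u → w ≠ v → Even (G.deg S w))
    (hreach : ∀ a ∈ S, ∃ g ∈ S, (u ∈ G.ends g ∨ v ∈ G.ends g) ∧ ReflTransGen (G.Touch S) a g) :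
    G.conn S := by
  classical
  obtain ⟨eu, heuS, heu, -⟩ := exists_unique_of_deg_eq_one hu
  refine conn_of_forall_reach (g := eu) fun a ha => ?_
  set K : Set G.E := {g | g ∈ S ∧ ReflTransGen (G.Touch S) a g}
  have hclosed : ∀ g ∈ K, ∀ h ∈ S, ∀ w, w ∈ G.ends g → w ∈ G.ends h → h ∈ K :=
    fun g hg h hh w hwg hwh => ⟨hh, hg.2.tail ⟨hg.1, hh, w, hwg, hwh⟩⟩
  have hdegK : ∀ w ∈ G.verts K, G.deg K w = G.deg S w := by
    rintro w ⟨k, hk, hwk⟩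
    exact congrArg Set.ncard (Set.ext fun e =>
      ⟨fun he => ⟨he.1.1, he.2⟩, fun he => ⟨hclosed k hk e he.1 w hwk he.2, he.2⟩⟩)
  have hdeg01 : ∀ w, G.deg S w = 1 → G.deg K w = if w ∈ G.verts K then 1 else 0 := by
    intro w hw
    split_ifs with hwK
    · rw [hdegK w hwK, hw]
    · exact deg_eq_zero_iff.2 hwK
  have hpar : Even (G.deg K u + G.deg K v) := by
    refine even_deg_add_deg huv fun w hwu hwv => ?_
    by_cases hwK : w ∈ G.verts K
    · rw [hdegK w hwK]; exact heven w hwu hwv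
    · rw [deg_eq_zero_iff.2 hwK]; exact ⟨0, rfl⟩
  rw [hdeg01 u hu, hdeg01 v hv] at hpar
  have huK : u ∈ G.verts K := by
    obtain ⟨g, hgS, hg, hag⟩ := hreach a ha
    rcases hg with hg | hg
    · exact ⟨g, ⟨hgS, hag⟩, hg⟩
    · by_contra huK
      simp [huK, show v ∈ G.verts K from ⟨g, ⟨hgS, hag⟩, hg⟩] at hpar
  obtain ⟨k, hk, huk⟩ := huK
  exact (hclosed k hk eu heuS u huk heu).2

end Conn

section PathCycle

lemma IsPath.symm {P : Set G.E} {a b : G.V} (h : G.IsPath P a b) : G.IsPath P b a := by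
  rcases h with ⟨hab, hP⟩ | ⟨hab, hne, ha, hb, hint, hconn⟩
  · exact Or.inl ⟨hab.symm, hP⟩
  · exact Or.inr ⟨hab.symm, hne, hb, ha, fun w hwb hwa => hint w hwa hwb, hconn⟩

lemma IsPath.cons {P : Set G.E} {f : G.E} {x y t : G.V} (hP : G.IsPath P y t)
    (hf : G.ends f = s(x, y)) (hx : x ∉ G.pverts P y t) : G.IsPath (insert f P) x t := by
  have hxP : x ∉ G.verts P := fun h => hx (Or.inl h)
  have hxy : x ≠ y := fun h => hx (Or.inr (Or.inl h))
  have hxt : x ≠ t := fun h => hx (Or.inr (Or.inr h))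
  have hfP : f ∉ P := fun h => hxP ⟨f, h, by rw [hf]; exact Sym2.mem_mk_left x y⟩
  have hdeg : ∀ w, G.deg (insert f P) w = G.deg P w + if w = x ∨ w = y then 1 else 0 := by
    intro w
    simp only [deg_insert hfP, hf, Sym2.mem_iff]
  have hdx : G.deg P x = 0 := deg_eq_zero_iff.2 hxP
  rcases hP with ⟨rfl, rfl⟩ | ⟨hyt, -, hy, ht, hint, hconn⟩
  · have h0 : ∀ w, G.deg ∅ w = 0 := fun w => deg_eq_zero_iff.2 (by simp [verts])
    refine Or.inr ⟨hxt, Set.insert_nonempty _ _, by rw [hdeg]; simp [h0], by rw [hdeg]; simp [h0],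
      fun w hwx hwy => by rw [hdeg]; simp [h0, hwx, hwy], by simpa using conn_singleton f⟩
  · refine Or.inr ⟨hxt, Set.insert_nonempty _ _, by simp [hdeg, hdx],
      by simp [hdeg, ht, hxt.symm, hyt.symm], fun w hwx hwt => ?_, ?_⟩
    · by_cases hwy : w = y
      · subst hwy
        simp [hdeg, hy, hwx]
      · simpa [hdeg, hwx, hwy] using hint w hwy hwt
    · obtain ⟨g, hgP, hyg, -⟩ := exists_unique_of_deg_eq_one hy
      rw [Set.insert_eq]
      exact conn_union (conn_singleton f) hconn rfl hgP (by rw [hf]; exact Sym2.mem_mk_right x y)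
        hyg

lemma isPath_singleton {f : G.E} {u v : G.V} (hf : G.ends f = s(u, v)) : G.IsPath {f} u v := by
  have huv : u ≠ v := fun h => G.loopless f (by rw [hf, h]; exact Sym2.mk_isDiag_iff.2 rfl)
  simpa using IsPath.cons (Or.inl ⟨rfl, rfl⟩ : G.IsPath ∅ v v) hf (by simp [pverts, verts, huv])

lemma IsPath.isCycle_union {P₁ P₂ : Set G.E} {u v : G.V} (h₁ : G.IsPath P₁ u v)
    (h₂ : G.IsPath P₂ u v) (huv : u ≠ v) (hdis : Disjoint P₁ P₂)
    (hverts : G.verts P₁ ∩ G.verts P₂ ⊆ {u, v}) : G.IsCycle (P₁ ∪ P₂) := by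
  rcases h₁ with ⟨h, -⟩ | ⟨-, hne₁, hu₁, hv₁, hint₁, hc₁⟩
  · exact absurd h huv
  rcases h₂ with ⟨h, -⟩ | ⟨-, -, hu₂, hv₂, hint₂, hc₂⟩
  · exact absurd h huv
  refine ⟨hne₁.mono Set.subset_union_left, fun w => ?_, ?_⟩
  · rw [deg_union hdis]
    by_cases hwu : w = u
    · simp [hwu, hu₁, hu₂]
    by_cases hwv : w = v
    · simp [hwv, hv₁, hv₂]
    by_cases hw₁ : w ∈ G.verts P₁
    · have hw₂ : w ∉ G.verts P₂ := fun hw₂ => by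
        rcases hverts ⟨hw₁, hw₂⟩ with h | h <;> contradiction
      simpa [deg_eq_zero_iff.2 hw₂] using hint₁ w hwu hwv
    · simpa [deg_eq_zero_iff.2 hw₁] using hint₂ w hwu hwv
  · obtain ⟨g₁, hg₁, hug₁, -⟩ := exists_unique_of_deg_eq_one hu₁
    obtain ⟨g₂, hg₂, hug₂, -⟩ := exists_unique_of_deg_eq_one hu₂
    exact conn_union hc₁ hc₂ hg₁ hg₂ hug₁ hug₂

lemma exists_touch_of_conn_union {C₁ C₂ : Set G.E} {u v : G.V} (hconn : G.conn (C₁ ∪ C₂))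
    (hdis : Disjoint C₁ C₂) (hverts : G.verts C₁ ∩ G.verts C₂ ⊆ {u, v}) (h₂ : C₂.Nonempty)
    {a : G.E} (ha : a ∈ C₁) :
    ∃ g ∈ C₁, ∃ w, (w = u ∨ w = v) ∧ w ∈ G.ends g ∧ w ∈ G.verts C₂ ∧
      ReflTransGen (G.Touch C₁) a g := by
  obtain ⟨b, hb⟩ := h₂
  rcases reflTransGen_touch_union ha (hconn a (Or.inl ha) b (Or.inr hb)) with
    ⟨hb₁, -⟩ | ⟨g, hg, g', hg', w, hwg, hwg', hag⟩
  · exact absurd hb (Set.disjoint_left.1 hdis hb₁)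
  · exact ⟨g, hg, w, hverts ⟨⟨g, hg, hwg⟩, ⟨g', hg', hwg'⟩⟩, hwg, ⟨g', hg', hwg'⟩, hag⟩

theorem IsCycle.isPath_of_union {C₁ C₂ : Set G.E} {u v : G.V} (hC : G.IsCycle (C₁ ∪ C₂))
    (huv : u ≠ v) (hdis : Disjoint C₁ C₂) (hverts : G.verts C₁ ∩ G.verts C₂ ⊆ {u, v})
    (h₁ : C₁.Nonempty) (h₂ : C₂.Nonempty) : G.IsPath C₁ u v := by
  obtain ⟨-, hCdeg, hCconn⟩ := hC
  have hsum : ∀ w, G.deg C₁ w + G.deg C₂ w = G.deg (C₁ ∪ C₂) w :=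
    fun w => (deg_union hdis w).symm
  have hint : ∀ w, w ≠ u → w ≠ v → G.deg C₁ w = 0 ∨ G.deg C₁ w = 2 := by
    intro w hwu hwv
    by_cases hw₂ : w ∈ G.verts C₂
    · refine Or.inl (deg_eq_zero_iff.2 fun hw₁ => ?_)
      rcases hverts ⟨hw₁, hw₂⟩ with h | h <;> contradiction
    · have := hsum w
      rw [deg_eq_zero_iff.2 hw₂, add_zero] at this
      rw [this]
      exact hCdeg w
  have heven : ∀ w, w ≠ u → w ≠ v → Even (G.deg C₁ w) := fun w hwu hwv => by
    rcases hint w hwu hwv with h | h <;> rw [h] <;> decide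
  have hpar := Nat.even_iff.1 (even_deg_add_deg huv heven)
  have hle : ∀ w, G.deg C₁ w ≤ 2 := fun w => by
    have := hsum w
    rcases hCdeg w with h | h <;> omega
  obtain ⟨a, ha⟩ := h₁
  obtain ⟨g, hg, w, hw, hwg, hw₂, -⟩ := exists_touch_of_conn_union hCconn hdis hverts h₂ ha
  have hw₁ : G.deg C₁ w = 1 := by
    have := hsum w
    have := mem_verts_iff_deg_ne_zero.1 ⟨g, hg, hwg⟩
    have := mem_verts_iff_deg_ne_zero.1 hw₂
    rcases hCdeg w with h | h <;> omega
  have hu : G.deg C₁ u = 1 := by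
    have := hle u
    have := hle v
    rcases hw with rfl | rfl <;> omega
  have hv : G.deg C₁ v = 1 := by
    have := hle v
    omega
  refine Or.inr ⟨huv, ⟨a, ha⟩, hu, hv, hint, conn_of_deg_eq_one huv hu hv heven fun a ha => ?_⟩
  obtain ⟨g, hg, w, hw, hwg, -, hag⟩ := exists_touch_of_conn_union hCconn hdis hverts h₂ ha
  exact ⟨g, hg, by rcases hw with rfl | rfl; exacts [Or.inl hwg, Or.inr hwg], hag⟩

end PathCycle

section Image

variable {α : Type*} {ι : α → G.E}

lemma deg_image (hι : ι.Injective) (A : Set α) (w : G.V) :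
    G.deg (ι '' A) w = {a ∈ A | w ∈ G.ends (ι a)}.ncard := by
  rw [deg, ← Set.ncard_image_of_injective _ hι]
  congr 1
  ext e
  constructor
  · rintro ⟨⟨a, ha, rfl⟩, hw⟩
    exact ⟨a, ⟨ha, hw⟩, rfl⟩
  · rintro ⟨a, ⟨ha, hw⟩, rfl⟩
    exact ⟨⟨a, ha, rfl⟩, hw⟩

lemma signOf_image (hι : ι.Injective) (A : Set α) :
    G.signOf (ι '' A) = ∏ᶠ a ∈ A, G.sgn (ι a) :=
  finprod_mem_image hι.injOn

lemma conn_image (hι : ι.Injective) (A : Set α) :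
    G.conn (ι '' A) ↔ ∀ a ∈ A, ∀ b ∈ A,
      ReflTransGen (fun a b => a ∈ A ∧ b ∈ A ∧ ∃ v, v ∈ G.ends (ι a) ∧ v ∈ G.ends (ι b)) a b := by
  constructor
  · intro h a ha b hb
    have key : ∀ {e f}, ReflTransGen (G.Touch (ι '' A)) e f → ∀ a ∈ A, ι a = e →
        ∃ b ∈ A, ι b = f ∧ ReflTransGen (fun a b => a ∈ A ∧ b ∈ A ∧
          ∃ v, v ∈ G.ends (ι a) ∧ v ∈ G.ends (ι b)) a b := by
      intro e f hef
      induction hef with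
      | refl => exact fun a ha hae => ⟨a, ha, hae, ReflTransGen.refl⟩
      | tail _ hstep ih =>
        intro a ha hae
        obtain ⟨c, hc, rfl, hac⟩ := ih a ha hae
        obtain ⟨-, ⟨d, hd, rfl⟩, w, hwc, hwd⟩ := hstep
        exact ⟨d, hd, rfl, hac.tail ⟨hc, hd, w, hwc, hwd⟩⟩
    obtain ⟨b', hb', hbb', hab'⟩ := key (h _ ⟨a, ha, rfl⟩ _ ⟨b, hb, rfl⟩) a ha rfl
    rwa [← hι hbb']
  · rintro h _ ⟨a, ha, rfl⟩ _ ⟨b, hb, rfl⟩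
    exact ReflTransGen.lift ι (fun a b hab => ⟨⟨a, hab.1, rfl⟩, ⟨b, hab.2.1, rfl⟩, hab.2.2⟩) _ _
      (h a ha b hb)

end Image

def PathsTied (F : Set G.E) (e : G.E) (u v : G.V) : Prop :=
  ∀ P P', P ⊆ F → P' ⊆ F → G.IsPath P u v → G.IsPath P' u v → e ∈ P → e ∈ P' →
    G.signOf P = G.signOf P'

section Plus1

variable {E₁ : Finset G.E} {u v : G.V} {huv : u ≠ v} {σ : ℤˣ}

/- `(G.plus1 E₁ huv σ).E` is a sum type only up to unfolding `plus1`, so lemmas about `Sum.inl`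
and `Sum.inr` do not rewrite there; these abbreviations carry the right type. -/
abbrev oldEdge (e : {e // e ∈ E₁}) : (G.plus1 E₁ huv σ).E := Sum.inl e

abbrev newEdge : (G.plus1 E₁ huv σ).E := Sum.inr ()

lemma oldEdge_injective : (oldEdge : {e // e ∈ E₁} → (G.plus1 E₁ huv σ).E).Injective :=
  Sum.inl_injective

lemma isPath_plus1_iff {A : Set {e // e ∈ E₁}} {x y : G.V} :
    (G.plus1 E₁ huv σ).IsPath (oldEdge '' A) x y ↔ G.IsPath (Subtype.val '' A) x y := by
  have hdeg : ∀ w : G.V, (G.plus1 E₁ huv σ).deg (oldEdge '' A) w = G.deg (Subtype.val '' A) w :=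
    fun w => (deg_image oldEdge_injective A w).trans (deg_image Subtype.val_injective A w).symm
  have hconn : (G.plus1 E₁ huv σ).conn (oldEdge '' A) ↔ G.conn (Subtype.val '' A) :=
    (conn_image oldEdge_injective A).trans (conn_image Subtype.val_injective A).symm
  unfold IsPath
  simp only [Set.image_nonempty, Set.image_eq_empty, hconn, hdeg x, hdeg y]
  exact or_congr Iff.rfl (and_congr_right' (and_congr_right' (and_congr_right' (and_congr_right'
    (and_congr_left' (forall_congr' fun w => by rw [hdeg w]; exact Iff.rfl))))))

lemma signOf_plus1 (A : Set {e // e ∈ E₁}) :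
    (G.plus1 E₁ huv σ).signOf (oldEdge '' A ∪ {newEdge}) = G.signOf (Subtype.val '' A) * σ := by
  refine (signOf_union (Set.disjoint_singleton_right.2 (by simp))).trans ?_
  rw [signOf_singleton, signOf_image oldEdge_injective, signOf_image Subtype.val_injective]
  rfl

lemma ends_newEdge : (G.plus1 E₁ huv σ).ends newEdge = s(u, v) := rfl

lemma eq_image_union_newEdge {D : Set (G.plus1 E₁ huv σ).E} (hD : newEdge ∈ D) :
    D = oldEdge '' (oldEdge ⁻¹' D) ∪ {newEdge} := by
  ext (e | ⟨⟩)
  · refine ⟨fun h => Or.inl ⟨e, h, rfl⟩, ?_⟩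
    rintro (⟨e', he', h⟩ | h)
    · rwa [← Sum.inl_injective h]
    · cases h
  · exact ⟨fun _ => Or.inr rfl, fun _ => hD⟩

theorem isCycle_plus1_iff (A : Set {e // e ∈ E₁}) :
    (G.plus1 E₁ huv σ).IsCycle (oldEdge '' A ∪ {newEdge}) ↔ G.IsPath (Subtype.val '' A) u v := by
  have hdis : Disjoint (oldEdge '' A) {(newEdge : (G.plus1 E₁ huv σ).E)} :=
    Set.disjoint_singleton_right.2 (by simp)
  have hverts : (G.plus1 E₁ huv σ).verts (oldEdge '' A) ∩
      (G.plus1 E₁ huv σ).verts {newEdge} ⊆ {u, v} := by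
    rintro w ⟨-, f, rfl, hw⟩
    exact Sym2.mem_iff.1 hw
  constructor
  · intro hD
    rcases A.eq_empty_or_nonempty with rfl | hA
    · have hu : (G.plus1 E₁ huv σ).deg {newEdge} u = 1 :=
        (deg_singleton (G := G.plus1 E₁ huv σ) newEdge u).trans (if_pos (Sym2.mem_mk_left u v))
      have := hD.2.1 u
      rw [Set.image_empty, Set.empty_union] at this
      omega
    · exact isPath_plus1_iff.1 (hD.isPath_of_union huv hdis hverts (hA.image _)
        (Set.singleton_nonempty _))
  · intro hP
    exact (isPath_plus1_iff.2 hP).isCycle_union (isPath_singleton ends_newEdge) huv hdis hverts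

theorem tied_plus1_iff {e : G.E} (he : e ∈ E₁) :
    (G.plus1 E₁ huv σ).Tied (oldEdge ⟨e, he⟩) newEdge ↔ G.PathsTied E₁ e u v := by
  constructor
  · intro htied P P' hP hP' hPp hP'p heP heP'
    have himage : ∀ {P : Set G.E}, P ⊆ E₁ →
        Subtype.val '' (Subtype.val ⁻¹' P : Set {e // e ∈ E₁}) = P :=
      fun hP => Set.ext fun e => ⟨fun ⟨_, he, hee⟩ => hee ▸ he, fun he => ⟨⟨e, hP he⟩, he, rfl⟩⟩
    have h := htied _ _ ((isCycle_plus1_iff _).2 ((himage hP).symm ▸ hPp))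
      ((isCycle_plus1_iff _).2 ((himage hP').symm ▸ hP'p))
      (Or.inl ⟨⟨e, he⟩, heP, rfl⟩) (Or.inr rfl) (Or.inl ⟨⟨e, he⟩, heP', rfl⟩) (Or.inr rfl)
    rw [signOf_plus1, signOf_plus1, himage hP, himage hP'] at h
    exact mul_right_cancel h
  · intro hpaths D D' hD hD' heD hfD heD' hfD'
    rw [eq_image_union_newEdge hfD] at hD ⊢
    rw [eq_image_union_newEdge hfD'] at hD' ⊢
    have hsub : ∀ A : Set {e // e ∈ E₁}, Subtype.val '' A ⊆ E₁ := fun A => by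
      rintro _ ⟨e, -, rfl⟩
      exact e.2
    rw [signOf_plus1, signOf_plus1, hpaths _ _ (hsub _) (hsub _) ((isCycle_plus1_iff _).1 hD)
      ((isCycle_plus1_iff _).1 hD') ⟨⟨e, he⟩, heD, rfl⟩ ⟨⟨e, he⟩, heD', rfl⟩]

end Plus1

end SGraph

namespace SimpleGraph

variable {V : Type*} {G : SimpleGraph V}

def NoCutVertex (G : SimpleGraph V) : Prop :=
  ∀ z w w' : V, w ≠ z → w' ≠ z → ∃ p : G.Walk w w', z ∉ p.support

namespace Walk

def InternallyDisjoint {x y : V} (p q : G.Walk x y) : Prop :=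
  ∀ c ∈ p.support, c ∈ q.support → c = x ∨ c = y

lemma InternallyDisjoint.symm {x y : V} {p q : G.Walk x y} (h : p.InternallyDisjoint q) :
    q.InternallyDisjoint p :=
  fun c hq hp => h c hp hq

lemma IsPath.append {u v w : V} {p : G.Walk u v} {q : G.Walk v w} (hp : p.IsPath)
    (hq : q.IsPath) (hpq : ∀ c ∈ p.support, c ∈ q.support → c = v) : (p.append q).IsPath := by
  have hq' := hq.support_nodup
  rw [← cons_tail_support] at hq'
  rw [isPath_def, support_append]
  refine hp.support_nodup.append (List.nodup_cons.1 hq').2 fun c hcp hcq => ?_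
  obtain rfl := hpq c hcp (List.mem_of_mem_tail hcq)
  exact (List.nodup_cons.1 hq').1 hcq

lemma exists_prefix_inter_eq_end (A : Set V) :
    ∀ {s t : V} (w : G.Walk s t), t ∈ A →
      ∃ z ∈ A, ∃ w₁ : G.Walk s z, w₁.support ⊆ w.support ∧ ∀ c ∈ w₁.support, c ∈ A → c = z
  | _, _, nil, ht => ⟨_, ht, nil, List.Subset.refl _, by simp⟩
  | s, _, cons h p, ht => by
    by_cases hs : s ∈ A
    · exact ⟨s, hs, nil, by simp, by simp⟩
    obtain ⟨z, hz, w₁, hsub, hmin⟩ := exists_prefix_inter_eq_end A p ht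
    refine ⟨z, hz, cons h w₁, List.cons_subset_cons _ hsub, fun c hc hcA => ?_⟩
    rcases List.mem_cons.1 (support_cons h w₁ ▸ hc) with rfl | hc
    · exact absurd hcA hs
    · exact hmin c hc hcA

variable [DecidableEq V]

/-- The inductive step of Whitney's theorem: follow `p` up to `z` and then `r` back to `y`, and
extend `q` by the edge `y'y`. -/
lemma exists_internallyDisjoint_of_reroute {x y y' z : V} (hxy : x ≠ y) {p q : G.Walk x y'}
    (hp : p.IsPath) (hq : q.IsPath) (hpq : p.InternallyDisjoint q) (hadj : G.Adj y' y)
    {r : G.Walk y z} (hr : r.IsPath) (hzp : z ∈ p.support) (hy'r : y' ∉ r.support)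
    (hmin : ∀ c ∈ r.support, c ∈ p.support ∨ c ∈ q.support → c = z) :
    ∃ P Q : G.Walk x y, P.IsPath ∧ Q.IsPath ∧ P.InternallyDisjoint Q := by
  have hzy' : z ≠ y' := fun h => hy'r (h ▸ r.end_mem_support)
  have hzq : z ∈ q.support → z = x := fun hzq =>
    (hpq z hzp hzq).resolve_right hzy'
  have hyq : y ∉ q.support := fun hyq => by
    have hyz := hmin y r.start_mem_support (Or.inr hyq)
    rcases hpq y (hyz ▸ hzp) hyq with h | h
    exacts [hxy h.symm, hadj.ne h.symm]
  have hy'p : y' ∉ (p.takeUntil z hzp).support := endpoint_notMem_support_takeUntil hp hzp hzy'.symm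
  refine ⟨(p.takeUntil z hzp).append r.reverse, q.concat hadj, ?_, hq.concat hyq hadj, ?_⟩
  · refine (hp.takeUntil hzp).append hr.reverse fun c hc hcr => ?_
    exact hmin c (by simpa using hcr) (Or.inl (support_takeUntil_subset_support _ _ hc))
  · intro c hcP hcQ
    rw [support_concat, List.mem_append, List.mem_singleton] at hcQ
    rcases hcQ with hcq | rfl
    · rw [support_append, List.mem_append] at hcP
      rcases hcP with hct | hcr
      · rcases hpq c (support_takeUntil_subset_support _ _ hct) hcq with h | rfl
        exacts [Or.inl h, absurd hct hy'p]
      · have hcz := hmin c (by simpa using List.mem_of_mem_tail hcr) (Or.inr hcq)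
        exact Or.inl (hcz ▸ hzq (hcz ▸ hcq))
    · exact Or.inr rfl

end Walk

open Walk

/-- Whitney's theorem, by induction along the walk from `y` to `x`. -/
theorem exists_internallyDisjoint_paths [DecidableEq V] (h : G.NoCutVertex) :
    ∀ {y x : V}, G.Walk y x → x ≠ y →
      ∃ p q : G.Walk x y, p.IsPath ∧ q.IsPath ∧ p.InternallyDisjoint q
  | _, _, .nil, hxy => absurd rfl hxy
  | y, x, .cons (v := y') hadj w', hxy => by
    by_cases hxy' : x = y'
    · subst hxy'
      refine ⟨hadj.symm.toWalk, hadj.symm.toWalk, IsPath.of_adj _, IsPath.of_adj _, ?_⟩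
      intro c hc _
      simpa using hc
    obtain ⟨p, q, hp, hq, hpq⟩ := exists_internallyDisjoint_paths h w' hxy'
    obtain ⟨r, hr⟩ := h y' x y hxy' hadj.ne
    obtain ⟨z, hzA, r₁, hsub, hmin⟩ :=
      r.reverse.exists_prefix_inter_eq_end {c | c ∈ p.support ∨ c ∈ q.support}
        (Or.inl p.start_mem_support)
    have hy'r : y' ∉ r₁.bypass.support := fun hy' =>
      hr (by simpa using hsub (support_bypass_subset_support _ hy'))
    have hmin' : ∀ c ∈ r₁.bypass.support, c ∈ p.support ∨ c ∈ q.support → c = z :=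
      fun c hc => hmin c (support_bypass_subset_support _ hc)
    rcases hzA with hzp | hzq
    · exact exists_internallyDisjoint_of_reroute hxy hp hq hpq hadj.symm (bypass_isPath _) hzp
        hy'r hmin'
    · obtain ⟨P, Q, hP, hQ, hPQ⟩ := exists_internallyDisjoint_of_reroute hxy hq hp hpq.symm
        hadj.symm (bypass_isPath _) hzq hy'r fun c hc hc' => hmin' c hc hc'.symm
      exact ⟨P, Q, hP, hQ, hPQ⟩

lemma noCutVertex_of_forall_exists_hub
    (h : ∀ z, ∃ c, ∀ w, w ≠ z → ∃ p : G.Walk w c, z ∉ p.support) : G.NoCutVertex := by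
  intro z w w' hw hw'
  obtain ⟨c, hc⟩ := h z
  obtain ⟨p, hp⟩ := hc w hw
  obtain ⟨p', hp'⟩ := hc w' hw'
  exact ⟨p.append p'.reverse, by simp [hp, hp']⟩

def addApex (G : SimpleGraph V) (S : Set V) : SimpleGraph (Option V) where
  Adj
    | some x, some y => G.Adj x y
    | none, some y => y ∈ S
    | some x, none => x ∈ S
    | none, none => False
  symm := ⟨by rintro (_ | x) (_ | y) h <;> first | exact h | exact h.symm⟩
  loopless := ⟨by rintro (_ | x) h; exacts [h, G.loopless.irrefl x h]⟩

variable {S : Set V}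

@[simp] lemma addApex_adj_some_some {x y : V} : (G.addApex S).Adj (some x) (some y) ↔ G.Adj x y :=
  Iff.rfl

@[simp] lemma not_addApex_adj_none_none : ¬ (G.addApex S).Adj none none := id

def someHom (G : SimpleGraph V) (S : Set V) : G →g G.addApex S := ⟨some, id⟩

lemma notMem_support_map_someHom {x y : V} (p : G.Walk x y) {z : Option V}
    (hz : ∀ c ∈ p.support, some c ≠ z) : z ∉ (p.map (someHom G S)).support := by
  simp only [Walk.support_map, List.mem_map, not_exists, not_and]
  exact hz

lemma addApex_preconnected (hG : G.Preconnected) {s : V} (hs : s ∈ S) :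
    (G.addApex S).Preconnected := by
  have hub : ∀ w, (G.addApex S).Reachable w (some s) := by
    rintro (_ | w)
    · exact (show (G.addApex S).Adj none (some s) from hs).reachable
    · exact (hG w s).map (someHom G S)
  exact fun w w' => (hub w).trans (hub w').symm

lemma addApex_noCutVertex (hG : G.Preconnected) (h : G.NoCutVertex) {s t : V} (hs : s ∈ S)
    (ht : t ∈ S) (hst : s ≠ t) : (G.addApex S).NoCutVertex := by
  refine noCutVertex_of_forall_exists_hub fun z => ?_
  rcases z with _ | z
  · refine ⟨some s, ?_⟩
    rintro (_ | w) hw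
    · exact absurd rfl hw
    · exact ⟨((hG w s).some).map (someHom G S), notMem_support_map_someHom _ (by simp)⟩
  · obtain ⟨c, hcS, hcz⟩ : ∃ c ∈ S, c ≠ z := by
      by_cases hsz : s = z
      · exact ⟨t, ht, hsz ▸ hst.symm⟩
      · exact ⟨s, hs, hsz⟩
    refine ⟨some c, ?_⟩
    rintro (_ | w) hw
    · exact ⟨(show (G.addApex S).Adj none (some c) from hcS).toWalk, by simp [hcz.symm]⟩
    · obtain ⟨p, hp⟩ := h z w c (fun h => hw (congrArg some h)) hcz
      exact ⟨p.map (someHom G S), notMem_support_map_someHom _ fun c hc h =>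
        hp (Option.some_injective _ h ▸ hc)⟩

lemma exists_walk_of_none_notMem_support :
    ∀ {a b : Option V} (p : (G.addApex S).Walk a b) {x y : V}, a = some x → b = some y →
      none ∉ p.support → ∃ q : G.Walk x y, q.support.map some = p.support
  | _, _, .nil, _, _, rfl, h, _ => by
    obtain rfl := Option.some_injective _ h
    exact ⟨.nil, rfl⟩
  | _, _, .cons (v := some _) hadj p, _, _, rfl, rfl, hp => by
    obtain ⟨q, hq⟩ := exists_walk_of_none_notMem_support p rfl rfl fun h => hp (by simp [h])
    refine ⟨.cons (addApex_adj_some_some.1 hadj) q, ?_⟩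
    rw [Walk.support_cons, List.map_cons, hq]
    rfl
  | _, _, .cons (v := none) _ _, _, _, rfl, rfl, hp => absurd (by simp) hp

lemma exists_isPath_of_isPath_addApex {y : V} (p : (G.addApex S).Walk none (some y))
    (hp : p.IsPath) :
    ∃ s ∈ S, ∃ q : G.Walk s y, q.IsPath ∧ ∀ c ∈ q.support, some c ∈ p.support := by
  cases p with
  | @cons _ c _ hadj p =>
    rcases c with _ | s
    · exact absurd hadj not_addApex_adj_none_none
    obtain ⟨hp, hnone⟩ := (Walk.cons_isPath_iff _ _).1 hp
    obtain ⟨q, hq⟩ := exists_walk_of_none_notMem_support p rfl rfl hnone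
    refine ⟨s, hadj, q, ?_, fun c hc => ?_⟩
    · rw [Walk.isPath_def, ← List.nodup_map_iff (Option.some_injective V), hq]
      exact hp.support_nodup
    · rw [Walk.support_cons, ← hq]
      exact List.mem_cons_of_mem _ (List.mem_map_of_mem hc)

/-- The case `k = 2` of Menger's theorem: apply Whitney's theorem to the graph with one new vertex
joined to `a, b` and another one joined to `u, v`. -/
theorem exists_disjoint_paths (hG : G.Preconnected) (h : G.NoCutVertex) {a b u v : V}
    (hab : a ≠ b) (huv : u ≠ v) :
    ∃ u' v' : V, s(u', v') = s(u, v) ∧ ∃ (p : G.Walk a u') (q : G.Walk b v'),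
      p.IsPath ∧ q.IsPath ∧ ∀ c ∈ p.support, c ∉ q.support := by
  classical
  set G₁ := G.addApex {u, v}
  set K := G₁.addApex {some a, some b}
  have hG₁ : G₁.Preconnected := addApex_preconnected hG (Set.mem_insert u _)
  have hK : K.NoCutVertex :=
    addApex_noCutVertex hG₁ (addApex_noCutVertex hG h (Set.mem_insert _ _) (by simp) huv)
      (Set.mem_insert (some a) _) (t := some b) (by simp) (by simpa using hab)
  have hpeel : ∀ p : K.Walk none (some none), p.IsPath →
      ∃ a' ∈ ({a, b} : Set V), ∃ u' ∈ ({u, v} : Set V), ∃ r : G.Walk a' u',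
        r.IsPath ∧ ∀ c ∈ r.support, some (some c) ∈ p.support := by
    intro p hp
    obtain ⟨_ | a', ha', p₁, hp₁, hsub₁⟩ := exists_isPath_of_isPath_addApex p hp
    · simp at ha'
    obtain ⟨u', hu', r, hr, hsub⟩ := exists_isPath_of_isPath_addApex p₁.reverse hp₁.reverse
    refine ⟨a', by simpa using ha', u', hu', r.reverse, hr.reverse, fun c hc => hsub₁ _ ?_⟩
    simpa using hsub c (by simpa using hc)
  obtain ⟨p, q, hp, hq, hpq⟩ := exists_internallyDisjoint_paths hK
    ((addApex_preconnected hG₁ (Set.mem_insert _ _)) (some none) none).some (by simp)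
  obtain ⟨a₁, ha₁, u₁, hu₁, r₁, hr₁, hsub₁⟩ := hpeel p hp
  obtain ⟨a₂, ha₂, u₂, hu₂, r₂, hr₂, hsub₂⟩ := hpeel q hq
  have hdisj : ∀ c ∈ r₁.support, c ∉ r₂.support := fun c h₁ h₂ => by
    simpa using hpq _ (hsub₁ c h₁) (hsub₂ c h₂)
  have ha : a₁ ≠ a₂ := fun h => hdisj a₁ r₁.start_mem_support (h ▸ r₂.start_mem_support)
  have hu : u₁ ≠ u₂ := fun h => hdisj u₁ r₁.end_mem_support (h ▸ r₂.end_mem_support)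
  have hu₁₂ : s(u₁, u₂) = s(u, v) := by
    rcases hu₁ with rfl | rfl <;> rcases hu₂ with rfl | rfl
    exacts [absurd rfl hu, rfl, Sym2.eq_swap, absurd rfl hu]
  rcases ha₁ with rfl | rfl <;> rcases ha₂ with rfl | rfl
  · exact absurd rfl ha
  · exact ⟨u₁, u₂, hu₁₂, r₁, r₂, hr₁, hr₂, hdisj⟩
  · exact ⟨u₂, u₁, Sym2.eq_swap.trans hu₁₂, r₂, r₁, hr₂, hr₁, fun c h₂ h₁ => hdisj c h₁ h₂⟩
  · exact absurd rfl ha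

end SimpleGraph

namespace SGraph

open SimpleGraph Walk

variable {G : SGraph}

def toSimpleGraph (G : SGraph) : SimpleGraph G.V := SimpleGraph.fromEdgeSet (Set.range G.ends)

lemma toSimpleGraph_adj {x y : G.V} : G.toSimpleGraph.Adj x y ↔ ∃ e, G.ends e = s(x, y) := by
  rw [toSimpleGraph, fromEdgeSet_adj, Set.mem_range]
  refine ⟨And.left, fun h => ⟨h, ?_⟩⟩
  rintro rfl
  obtain ⟨e, he⟩ := h
  exact G.loopless e (he ▸ Sym2.mk_isDiag_iff.2 rfl)

lemma ReachOutside.exists_walk {S : Set G.V} {a b : G.V} (h : G.ReachOutside S a b) (ha : a ∉ S) :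
    ∃ p : G.toSimpleGraph.Walk a b, ∀ c ∈ p.support, c ∉ S := by
  induction h with
  | refl => exact ⟨nil, by simpa using ha⟩
  | tail _ hstep ih =>
    obtain ⟨p, hp⟩ := ih
    obtain ⟨-, hd, e, he⟩ := hstep
    refine ⟨p.concat (toSimpleGraph_adj.2 ⟨e, he⟩), fun c hc => ?_⟩
    rw [support_concat, List.mem_append, List.mem_singleton] at hc
    rcases hc with hc | rfl
    exacts [hp c hc, hd]

lemma KConnected.toSimpleGraph_preconnected (h : G.KConnected 2) :
    G.toSimpleGraph.Preconnected := fun a b =>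
  ⟨(ReachOutside.exists_walk (h.2 ∅ (by simp) a b (by simp) (by simp)) (by simp)).choose⟩

lemma KConnected.toSimpleGraph_noCutVertex (h : G.KConnected 2) : G.toSimpleGraph.NoCutVertex := by
  intro z w w' hw hw'
  have hz : w ∉ ({z} : Set G.V) := hw
  obtain ⟨p, hp⟩ := ReachOutside.exists_walk (h.2 {z} (by simp) w w' hw hw') hz
  exact ⟨p, fun hzp => hp z hzp rfl⟩

lemma exists_isPath_of_toSimpleGraph_isPath {F : Set G.E} :
    ∀ {x y : G.V} (p : G.toSimpleGraph.Walk x y), p.IsPath →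
      (∀ z ∈ p.edges, ∃ e ∈ F, G.ends e = z) →
      ∃ P ⊆ F, G.IsPath P x y ∧ G.verts P ⊆ {c | c ∈ p.support} ∧
        ∀ z ∈ p.edges, ∃ e ∈ P, G.ends e = z
  | _, _, .nil, _, _ => ⟨∅, Set.empty_subset _, Or.inl ⟨rfl, rfl⟩, by simp [verts], by simp⟩
  | x, _, .cons (v := x₁) hadj p, hp, hF => by
    obtain ⟨hp', hxp⟩ := (cons_isPath_iff _ _).1 hp
    obtain ⟨P, hPF, hP, hPv, hPz⟩ :=
      exists_isPath_of_toSimpleGraph_isPath p hp' fun z hz => hF z (List.mem_cons_of_mem _ hz)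
    obtain ⟨f, hfF, hf⟩ := hF s(x, x₁) List.mem_cons_self
    refine ⟨insert f P, Set.insert_subset hfF hPF, hP.cons hf ?_, ?_, ?_⟩
    · rintro (hv | rfl | rfl)
      exacts [hxp (hPv hv), hxp p.start_mem_support, hxp p.end_mem_support]
    · rw [verts_insert, hf]
      rintro c (hc | hc)
      · rcases Sym2.mem_iff.1 hc with rfl | rfl <;> simp
      · exact List.mem_cons_of_mem _ (hPv hc)
    · intro z hz
      rcases List.mem_cons.1 hz with rfl | hz
      · exact ⟨f, Set.mem_insert _ _, hf⟩
      · obtain ⟨e, heP, he⟩ := hPz z hz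
        exact ⟨e, Set.mem_insert_of_mem _ heP, he⟩

lemma exists_mem_of_mem_edges {E₁ E₂ : Set G.E} {u v : G.V} (hcover : ∀ e, e ∈ E₁ ∨ e ∈ E₂)
    (hsep : G.verts E₁ ∩ G.verts E₂ ⊆ {u, v}) :
    ∀ {x y : G.V} (p : G.toSimpleGraph.Walk x y), p.IsPath → x ∈ G.verts E₂ →
      (∀ c ∈ p.support, c = u ∨ c = v → c = y) → ∀ z ∈ p.edges, ∃ e ∈ E₂, G.ends e = z
  | _, _, .nil, _, _, _ => by simp
  | x, _, .cons (v := x₁) hadj p, hp, hx, hend => by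
    obtain ⟨hp', hxp⟩ := (cons_isPath_iff _ _).1 hp
    obtain ⟨e, he⟩ := toSimpleGraph_adj.1 hadj
    have he₂ : e ∈ E₂ := (hcover e).resolve_left fun he₁ => hxp <| by
      have := hend x (List.mem_cons_self) (hsep ⟨⟨e, he₁, he ▸ Sym2.mem_mk_left x x₁⟩, hx⟩)
      exact this ▸ p.end_mem_support
    intro z hz
    rcases List.mem_cons.1 hz with rfl | hz
    · exact ⟨e, he₂, he⟩
    · exact exists_mem_of_mem_edges hcover hsep p hp' ⟨e, he₂, he ▸ Sym2.mem_mk_right x x₁⟩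
        (fun c hc => hend c (List.mem_cons_of_mem _ hc)) z hz

/-- The two disjoint paths from the ends of `e₂` to `{u, v}` given by Menger's theorem stay in
`E₂`, and together with `e₂` they form the path. -/
theorem exists_isPath_mem_of_separation (h2 : G.KConnected 2) {E₁ E₂ : Set G.E} {u v : G.V}
    (huv : u ≠ v) (hcover : ∀ e, e ∈ E₁ ∨ e ∈ E₂) (hsep : G.verts E₁ ∩ G.verts E₂ ⊆ {u, v})
    {e₂ : G.E} (he₂ : e₂ ∈ E₂) : ∃ Q ⊆ E₂, G.IsPath Q u v ∧ e₂ ∈ Q := by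
  classical
  induction hab : G.ends e₂ using Sym2.ind with | _ a b => ?_
  have hadj : G.toSimpleGraph.Adj a b := toSimpleGraph_adj.2 ⟨e₂, hab⟩
  obtain ⟨u', v', huv', p, q, hp, hq, hpq⟩ :=
    exists_disjoint_paths h2.toSimpleGraph_preconnected
      h2.toSimpleGraph_noCutVertex hadj.ne huv
  have hsepuv : ∀ c, c = u ∨ c = v → c = u' ∨ c = v' := fun c hc => by
    rw [← Sym2.mem_iff, huv', Sym2.mem_iff]; exact hc
  have hpE := exists_mem_of_mem_edges hcover hsep p hp ⟨e₂, he₂, hab ▸ Sym2.mem_mk_left a b⟩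
    fun c hc huvc => (hsepuv c huvc).resolve_right fun h => hpq c hc (h ▸ q.end_mem_support)
  have hqE := exists_mem_of_mem_edges hcover hsep q hq ⟨e₂, he₂, hab ▸ Sym2.mem_mk_right a b⟩
    fun c hc huvc => (hsepuv c huvc).resolve_left fun h => hpq c (h ▸ p.end_mem_support) hc
  set W : G.toSimpleGraph.Walk u' v' := p.reverse.append (cons hadj q)
  have hW : W.IsPath := by
    refine hp.reverse.append (hq.cons fun ha => hpq a p.start_mem_support ha) fun c hc hc' => ?_
    rcases List.mem_cons.1 (support_cons _ _ ▸ hc') with rfl | hc'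
    exacts [rfl, absurd hc' (hpq c (by simpa using hc))]
  -- Excluding the edges parallel to `e₂` forces the lifted path to use `e₂` itself.
  set F : Set G.E := {e | e ∈ E₂ ∧ (G.ends e = s(a, b) → e = e₂)}
  have hWF : ∀ z ∈ W.edges, ∃ e ∈ F, G.ends e = z := by
    intro z hz
    simp only [W, edges_append, edges_reverse, edges_cons, List.mem_append, List.mem_reverse,
      List.mem_cons] at hz
    rcases hz with hz | rfl | hz
    · obtain ⟨e, he, rfl⟩ := hpE z hz
      refine ⟨e, ⟨he, fun h => absurd (q.start_mem_support) (hpq b ?_)⟩, rfl⟩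
      exact p.snd_mem_support_of_mem_edges (h ▸ hz)
    · exact ⟨e₂, ⟨he₂, fun _ => rfl⟩, hab⟩
    · obtain ⟨e, he, rfl⟩ := hqE z hz
      refine ⟨e, ⟨he, fun h => absurd (q.fst_mem_support_of_mem_edges (h ▸ hz))
        (hpq a p.start_mem_support)⟩, rfl⟩
  obtain ⟨Q, hQF, hQ, -, hQW⟩ := exists_isPath_of_toSimpleGraph_isPath W hW hWF
  obtain ⟨e, heQ, he⟩ := hQW s(a, b) (by simp [W])
  refine ⟨Q, fun e he => (hQF he).1, ?_, (hQF heQ).2 he ▸ heQ⟩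
  rcases Sym2.eq_iff.1 huv' with ⟨rfl, rfl⟩ | ⟨rfl, rfl⟩
  exacts [hQ, hQ.symm]

lemma Tied.symm {e f : G.E} (h : G.Tied e f) : G.Tied f e :=
  fun C C' hC hC' hfC heC hfC' heC' => h C C' hC hC' heC hfC heC' hfC'

section Separation

variable {E₁ E₂ : Set G.E} {u v : G.V}

theorem pathsTied_of_tied (h2 : G.KConnected 2) (huv : u ≠ v) (hdisj : Disjoint E₁ E₂)
    (hcover : ∀ e, e ∈ E₁ ∨ e ∈ E₂) (hsep : G.verts E₁ ∩ G.verts E₂ ⊆ {u, v}) {e₁ e₂ : G.E}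
    (he₂ : e₂ ∈ E₂) (htied : G.Tied e₁ e₂) : G.PathsTied E₁ e₁ u v := by
  obtain ⟨Q, hQE, hQ, heQ⟩ := exists_isPath_mem_of_separation h2 huv hcover hsep he₂
  have hcycle : ∀ {R}, R ⊆ E₁ → G.IsPath R u v → G.IsCycle (R ∪ Q) := fun hR hRp =>
    hRp.isCycle_union hQ huv (hdisj.mono hR hQE)
      fun _ hw => hsep ⟨verts_mono hR hw.1, verts_mono hQE hw.2⟩
  intro P P' hP hP' hPp hP'p heP heP'
  have h := htied _ _ (hcycle hP hPp) (hcycle hP' hP'p) (Or.inl heP) (Or.inr heQ) (Or.inl heP')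
    (Or.inr heQ)
  rwa [signOf_union (hdisj.mono hP hQE), signOf_union (hdisj.mono hP' hQE), mul_left_inj] at h

theorem tied_of_pathsTied (huv : u ≠ v) (hdisj : Disjoint E₁ E₂)
    (hcover : ∀ e, e ∈ E₁ ∨ e ∈ E₂) (hsep : G.verts E₁ ∩ G.verts E₂ ⊆ {u, v}) {e₁ e₂ : G.E}
    (he₁ : e₁ ∈ E₁) (he₂ : e₂ ∈ E₂) (h₁ : G.PathsTied E₁ e₁ u v) (h₂ : G.PathsTied E₂ e₂ u v) :
    G.Tied e₁ e₂ := by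
  have hsplit : ∀ {C}, G.IsCycle C → e₁ ∈ C → e₂ ∈ C → G.IsPath (C ∩ E₁) u v ∧
      G.IsPath (C ∩ E₂) u v ∧ G.signOf C = G.signOf (C ∩ E₁) * G.signOf (C ∩ E₂) := by
    intro C hC he₁C he₂C
    have hC₁₂ : C ∩ E₁ ∪ C ∩ E₂ = C := by
      rw [← Set.inter_union_distrib_left, Set.inter_eq_left]
      exact fun e _ => hcover e
    have hdis : Disjoint (C ∩ E₁) (C ∩ E₂) :=
      hdisj.mono Set.inter_subset_right Set.inter_subset_right
    have hv : G.verts (C ∩ E₁) ∩ G.verts (C ∩ E₂) ⊆ {u, v} := fun _ hw =>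
      hsep ⟨verts_mono Set.inter_subset_right hw.1, verts_mono Set.inter_subset_right hw.2⟩
    rw [← hC₁₂] at hC
    refine ⟨hC.isPath_of_union huv hdis hv ⟨e₁, he₁C, he₁⟩ ⟨e₂, he₂C, he₂⟩, ?_,
      by rw [← signOf_union hdis, hC₁₂]⟩
    rw [Set.union_comm] at hC
    exact hC.isPath_of_union huv hdis.symm (Set.inter_comm _ _ ▸ hv) ⟨e₂, he₂C, he₂⟩
      ⟨e₁, he₁C, he₁⟩
  intro C C' hC hC' he₁C he₂C he₁C' he₂C'
  obtain ⟨hP₁, hP₂, hs⟩ := hsplit hC he₁C he₂C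
  obtain ⟨hP₁', hP₂', hs'⟩ := hsplit hC' he₁C' he₂C'
  rw [hs, hs', h₁ _ _ Set.inter_subset_right Set.inter_subset_right hP₁ hP₁' ⟨he₁C, he₁⟩
    ⟨he₁C', he₁⟩, h₂ _ _ Set.inter_subset_right Set.inter_subset_right hP₂ hP₂' ⟨he₂C, he₂⟩
    ⟨he₂C', he₂⟩]

end Separation

end SGraph

/-- Observation 2.1(1): across a 2-separation with `eᵢ ∈ E(Gᵢ)`, the edges `e₁, e₂`
are tied in `G` iff `eᵢ` and the added positive edge `fᵢ = uv` are tied in `Gᵢ⁺`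
for both `i = 1, 2`. -/
theorem stmt_10 (G : SGraph) (h2 : G.KConnected 2)
    (E₁ E₂ : Finset G.E) (hdisj : Disjoint E₁ E₂) (hcover : E₁ ∪ E₂ = Finset.univ)
    (u v : G.V) (huv : u ≠ v)
    (hsep : G.verts ↑E₁ ∩ G.verts ↑E₂ = {u, v})
    (e₁ : G.E) (he₁ : e₁ ∈ E₁) (e₂ : G.E) (he₂ : e₂ ∈ E₂) :
    G.Tied e₁ e₂ ↔
      ((G.plus1 E₁ huv 1).Tied (Sum.inl ⟨e₁, he₁⟩) (Sum.inr ()) ∧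
       (G.plus1 E₂ huv 1).Tied (Sum.inl ⟨e₂, he₂⟩) (Sum.inr ())) := by
  have hdisj' : Disjoint (E₁ : Set G.E) E₂ := Finset.disjoint_coe.2 hdisj
  have hcover' : ∀ e, e ∈ (E₁ : Set G.E) ∨ e ∈ (E₂ : Set G.E) :=
    fun e => Finset.mem_union.1 (hcover ▸ Finset.mem_univ e)
  have hsep' : G.verts E₂ ∩ G.verts E₁ ⊆ {u, v} := Set.inter_comm _ _ ▸ hsep.subset
  refine Iff.trans ?_ (and_congr (SGraph.tied_plus1_iff he₁) (SGraph.tied_plus1_iff he₂)).symm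
  exact ⟨fun h => ⟨SGraph.pathsTied_of_tied h2 huv hdisj' hcover' hsep.subset he₂ h,
      SGraph.pathsTied_of_tied h2 huv hdisj'.symm (fun e => (hcover' e).symm) hsep' he₁ h.symm⟩,
    fun ⟨h₁, h₂⟩ => SGraph.tied_of_pathsTied huv hdisj' hcover' hsep.subset he₁ he₂ h₁ h₂⟩
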